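/- Let p ≥ 1 and 0 ≤ k ≤ p-1. Then (1/2) C(-1/2, k) ∑_{l=k}^{p-1} C(p, p-1-l) C(-1/2, l-k) = ((-1)^k / k!) · (1/(p-k-1)!) · ((2p-1)!/(2k+1)) · (1/(2^{2p-1}(p-1)!)). -/

import Mathlib

/-- Generalized binomial coefficient `C(x, j)` for real `x` and integer `j`. -/
noncomputable def gchoose (x : ℝ) (j : ℤ) : ℝ :=
  if 0 ≤ j then (∏ i ∈ Finset.range j.toNat, (x - i)) / (Nat.factorial j.toNat : ℝ) else 0

/-!
Writing `p = k + n + 1`, the shifted sum is the Chu–Vandermonde convolution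
`∑ᵢ C(p, n - i) C(-1/2, i) = C(p - 1/2, n)`. Both `C(-1/2, k)` and `C(k + n + 1/2, n)` have
closed forms in factorials (their numerators are products of half-integers), and the identity
becomes an equality of rational expressions in factorials and powers of `2`.
-/

open Finset Nat

lemma gchoose_natCast (x : ℝ) (n : ℕ) : gchoose x n = (∏ i ∈ range n, (x - i)) / n ! := by
  simp [gchoose]

lemma gchoose_natCast_eq_ringChoose (x : ℝ) (n : ℕ) : gchoose x n = Ring.choose x n := by
  rw [gchoose_natCast, Ring.choose_eq_smul, ← Polynomial.aeval_eq_smeval,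
    Polynomial.aeval_def, Polynomial.eval₂_eq_eval_map, descPochhammer_map,
    descPochhammer_eval_eq_prod_range, smul_eq_mul, div_eq_inv_mul]

lemma gchoose_succ_right (x : ℝ) (n : ℕ) :
    gchoose x (n + 1 : ℕ) = gchoose x n * (x - n) / (n + 1) := by
  rw [gchoose_natCast, gchoose_natCast, prod_range_succ, factorial_succ]
  push_cast
  field_simp

lemma gchoose_add_one_succ (x : ℝ) (n : ℕ) :
    gchoose (x + 1) (n + 1 : ℕ) = (x + 1) / (n + 1) * gchoose x n := by
  rw [gchoose_natCast, gchoose_natCast, prod_range_succ', factorial_succ]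
  push_cast
  simp only [add_sub_add_right_eq_sub, sub_zero]
  field_simp

lemma sum_choose_mul_gchoose (x : ℝ) (p n : ℕ) :
    ∑ i ∈ range (n + 1), (p.choose (n - i) : ℝ) * gchoose x i = gchoose (x + p) n := by
  rw [gchoose_natCast_eq_ringChoose, Ring.add_choose_eq n (Commute.all _ _),
    Nat.sum_antidiagonal_eq_sum_range_succ_mk]
  refine sum_congr rfl fun i _ => ?_
  rw [gchoose_natCast_eq_ringChoose, Ring.choose_natCast, mul_comm]

lemma gchoose_neg_half (k : ℕ) : gchoose (-1/2) k = (-1) ^ k * (2 * k)! / (4 ^ k * k ! ^ 2) := by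
  induction k with
  | zero => simp [gchoose]
  | succ k ih =>
    rw [gchoose_succ_right, ih, show 2 * (k + 1) = 2 * k + 1 + 1 by ring]
    simp only [factorial_succ]
    push_cast
    field_simp
    ring

lemma gchoose_add_half (m n : ℕ) :
    gchoose (m + n + 1/2) n =
      (2 * (m + n) + 1)! * m ! / (4 ^ n * n ! * (m + n)! * (2 * m + 1)!) := by
  induction n with
  | zero => simp [gchoose, mul_comm (m ! : ℝ), div_self, factorial_ne_zero]
  | succ n ih =>
    rw [show (m : ℝ) + (n + 1 : ℕ) + 1/2 = (m + n + 1/2) + 1 by push_cast; ring,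
      gchoose_add_one_succ, ih, show 2 * (m + (n + 1)) + 1 = 2 * (m + n) + 1 + 1 + 1 by ring,
      ← add_assoc]
    simp only [factorial_succ]
    push_cast
    field_simp
    ring

theorem half_gchoose_sum_identity (p k : ℕ) (hp : 1 ≤ p) (hk : k ≤ p - 1) :
    (1 / 2) * gchoose (-1/2) (k : ℤ) *
        ∑ l ∈ Finset.Icc k (p - 1),
          (Nat.choose p (p - 1 - l) : ℝ) * gchoose (-1/2) ((l : ℤ) - (k : ℤ))
      = ((-1 : ℝ) ^ k / (Nat.factorial k : ℝ)) * (1 / (Nat.factorial (p - k - 1) : ℝ)) *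
          ((Nat.factorial (2 * p - 1) : ℝ) / (2 * k + 1)) *
          (1 / (2 ^ (2 * p - 1) * (Nat.factorial (p - 1) : ℝ))) := by
  obtain ⟨n, rfl⟩ : ∃ n, p = k + n + 1 := ⟨p - 1 - k, by omega⟩
  have hsum : ∑ l ∈ Icc k (k + n + 1 - 1),
      ((k + n + 1).choose (k + n + 1 - 1 - l) : ℝ) * gchoose (-1/2) ((l : ℤ) - k)
      = ∑ i ∈ range (n + 1), ((k + n + 1).choose (n - i) : ℝ) * gchoose (-1/2) i := by
    rw [show Icc k (k + n + 1 - 1) = Ico k (k + n + 1) by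
        ext; simp only [mem_Icc, mem_Ico]; omega,
      sum_Ico_eq_sum_range, show k + n + 1 - k = n + 1 by omega]
    refine sum_congr rfl fun i _ => ?_
    rw [show k + n + 1 - 1 - (k + i) = n - i by omega]
    push_cast
    simp
  rw [hsum, sum_choose_mul_gchoose,
    show (-1/2 : ℝ) + (k + n + 1 : ℕ) = k + n + 1/2 by push_cast; ring,
    gchoose_neg_half, gchoose_add_half,
    show k + n + 1 - k - 1 = n by omega, show 2 * (k + n + 1) - 1 = 2 * (k + n) + 1 by omega,
    show k + n + 1 - 1 = k + n by omega, factorial_succ (2 * k)]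
  push_cast
  field_simp
  rw [show (4 : ℝ) = 2 ^ 2 by norm_num, ← pow_mul, ← pow_mul]
  ring
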